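/- arXiv:2407.02160 — 2 statements merged into one kernel-verified Lean document; each statement's English description precedes it below -/
import Mathlib

section
/- Suppose U₁, U₂ ∈ ℂ^{n×K} satisfy U₁ R = C̲ ⊙ B and U₂ R = C̄ ⊙ B for some nonsingular R ∈ ℂ^{K×K}, where C is a Vandermonde matrix with generators t₁,…,t_K, C̲ (resp. C̄) deletes its bottom (resp. top) row, and C̲ ⊙ B has full column rank K. Then U₁ has full column rank and U₁† U₂ = R T R^{-1}, where T = diag(t₁,…,t_K); in particular the eigenvalues of U₁† U₂ are exactly the generators t₁,…,t_K. -/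
open Matrix

/-- If `U₁ R = C̲ ⊙ B` and `U₂ R = C̄ ⊙ B` with `R` nonsingular, `C` Vandermonde
with generators `t_k`, and `C̲ ⊙ B` of full column rank `K`, then `U₁` has full
column rank, every left inverse (in particular the Moore-Penrose pseudoinverse)
`U₁†` satisfies `U₁† U₂ = R T R⁻¹` with `T = diag(t₁,…,t_K)`, and the
eigenvalues of `R T R⁻¹` are exactly the generators. -/
theorem shift_invariance_generator_recovery {L M K : ℕ}
    (t : Fin K → ℂ) (B : Matrix (Fin M) (Fin K) ℂ)
    (D₁ D₂ : Matrix (Fin (L - 1) × Fin M) (Fin K) ℂ)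
    (hD₁ : ∀ (p : Fin (L - 1) × Fin M) (k : Fin K), D₁ p k = t k ^ ((p.1 : ℕ) + 1) * B p.2 k)
    (hD₂ : ∀ (p : Fin (L - 1) × Fin M) (k : Fin K), D₂ p k = t k ^ ((p.1 : ℕ) + 2) * B p.2 k)
    (hrank : D₁.rank = K)
    (R : Matrix (Fin K) (Fin K) ℂ) (hR : IsUnit R)
    (U₁ U₂ : Matrix (Fin (L - 1) × Fin M) (Fin K) ℂ)
    (hU₁ : U₁ * R = D₁) (hU₂ : U₂ * R = D₂) :
    U₁.rank = K ∧
    (∀ Pinv : Matrix (Fin K) (Fin (L - 1) × Fin M) ℂ,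
      Pinv * U₁ = 1 → Pinv * U₂ = R * Matrix.diagonal t * R⁻¹) ∧
    spectrum ℂ (R * Matrix.diagonal t * R⁻¹) = Set.range t := by
  have hRdet : IsUnit R.det := (Matrix.isUnit_iff_isUnit_det R).mp hR
  have hD : D₂ = D₁ * Matrix.diagonal t := by
    ext p k
    rw [Matrix.mul_diagonal, hD₁, hD₂]
    ring
  have hU₂' : U₂ = U₁ * (R * Matrix.diagonal t * R⁻¹) := by
    have h1 : U₂ * R = U₁ * R * Matrix.diagonal t := by rw [hU₁, hU₂, hD]
    calc U₂ = U₂ * R * R⁻¹ := by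
            rw [Matrix.mul_assoc, Matrix.mul_nonsing_inv R hRdet, Matrix.mul_one]
      _ = U₁ * (R * Matrix.diagonal t * R⁻¹) := by
            rw [h1]; simp only [Matrix.mul_assoc]
  refine ⟨?_, ?_, ?_⟩
  · calc U₁.rank = (U₁ * R).rank := (Matrix.rank_mul_eq_left_of_isUnit_det R U₁ hRdet).symm
      _ = K := by rw [hU₁, hrank]
  · intro Pinv hP
    rw [hU₂', ← Matrix.mul_assoc, hP, Matrix.one_mul]
  · have : R * Matrix.diagonal t * R⁻¹ =
        (hR.unit : Matrix (Fin K) (Fin K) ℂ) * Matrix.diagonal t * ((hR.unit⁻¹ : (Matrix (Fin K) (Fin K) ℂ)ˣ) : Matrix (Fin K) (Fin K) ℂ) := by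
      rw [hR.unit_spec, Matrix.coe_units_inv, hR.unit_spec]
    rw [this, spectrum.units_conjugate, spectrum_diagonal]
end

section
/- Identifiability under the Vandermonde-constrained CP condition: suppose 𝒴 = Σ_{k=1}^K a_k ∘ b_k ∘ c_k where C = [c₁ ⋯ c_K] is Vandermonde with pairwise distinct unit-modulus generators, rank(C̲ ⊙ B) = K, and rank(A) = K. Then any alternative decomposition 𝒴 = Σ_{k=1}^K a'_k ∘ b'_k ∘ c'_k with C' Vandermonde (distinct generators, same constraints) satisfies: there exists a permutation π and scalars with a'_k ∘ b'_k ∘ c'_k = a_{π(k)} ∘ b_{π(k)} ∘ c_{π(k)} for all k; in particular the set of generators of C' equals that of C. -/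
/-!
Rows `(l, m)` and `(l + 1, m)` of `C ⊙ B` differ by the factor `diag t`. Since `rank A' = K`,
the columns of `C' ⊙ B'` lie in the column space of `C ⊙ B`, say `C' ⊙ B' = (C ⊙ B) T`, and
comparing the shifted rows on both sides (using `rank (C̲ ⊙ B) = K`) gives
`diag t · T = T · diag t'`. With distinct generators and `T` nonsingular this forces `T` to be a
permutation times a diagonal matrix, which matches the generators and the columns of `C ⊙ B`;
injectivity of `C ⊙ B` then carries the same scaling over to `A`.
-/

open Matrix Function

namespace Matrix

variable {ι ι₀ κ κ' ν : Type*}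

section Rank

variable {F : Type*} [Field F]

theorem mulVec_injective_of_rank_eq_card [Fintype κ] {A : Matrix ι κ F}
    (h : A.rank = Fintype.card κ) : Injective A.mulVec := by
  have hrank := A.mulVecLin.finrank_range_add_finrank_ker
  rw [show Module.finrank F (LinearMap.range A.mulVecLin) = Fintype.card κ from h,
    Module.finrank_fintype_fun_eq_card, Nat.add_eq_left] at hrank
  exact LinearMap.ker_eq_bot.mp (Submodule.finrank_eq_zero.mp hrank)

theorem mulVec_surjective_of_rank_eq_card [Fintype ι] [Fintype κ] {A : Matrix ι κ F}
    (h : A.rank = Fintype.card ι) : Surjective A.mulVec :=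
  LinearMap.range_eq_top.mp <| Submodule.eq_top_of_finrank_eq <|
    h.trans (Module.finrank_fintype_fun_eq_card F).symm

end Rank

section Semiring

variable {R : Type*} [Semiring R] [Fintype κ]

theorem mulVec_injective_of_submatrix {U : Matrix ι κ R} (r : ι₀ → ι)
    (h : Injective (U.submatrix r id).mulVec) : Injective U.mulVec :=
  fun _ _ hvw => h <| funext fun i => congrFun hvw (r i)

theorem mul_right_injective_of_mulVec_injective {U : Matrix ι κ R} (h : Injective U.mulVec) :
    Injective fun X : Matrix κ ν R => U * X :=
  fun _ _ hXY => ext_col fun j => h congr(($hXY).col j)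

theorem mulVec_injective_of_mul [Fintype κ'] {U : Matrix ι κ R} {T : Matrix κ κ' R}
    (h : Injective (U * T).mulVec) : Injective T.mulVec :=
  fun v w hvw => h <| by rw [← mulVec_mulVec, ← mulVec_mulVec, hvw]

theorem diagonal_mul_eq_mul_diagonal_of_shift [Fintype κ'] [DecidableEq κ] [DecidableEq κ']
    {U : Matrix ι κ R} {U' : Matrix ι κ' R} {T : Matrix κ κ' R} {t : κ → R} {t' : κ' → R}
    (lo hi : ι₀ → ι) (hU : ∀ i k, U (hi i) k = U (lo i) k * t k)
    (hU' : ∀ i k, U' (hi i) k = U' (lo i) k * t' k)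
    (hinj : Injective (U.submatrix lo id).mulVec) (hT : U' = U * T) :
    diagonal t * T = T * diagonal t' := by
  have hsub (r : ι₀ → ι) : (U * T).submatrix r id = U.submatrix r id * T := by
    simpa using submatrix_mul U T r id id bijective_id
  refine mul_right_injective_of_mulVec_injective hinj ?_
  calc U.submatrix lo id * (diagonal t * T)
      = U.submatrix hi id * T := by
        rw [← Matrix.mul_assoc]; congr 1; ext i k; simp [hU]
    _ = U'.submatrix hi id := by rw [hT, hsub]
    _ = U'.submatrix lo id * diagonal t' := by ext i k; simp [hU']
    _ = U.submatrix lo id * (T * diagonal t') := by rw [hT, hsub, Matrix.mul_assoc]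

theorem mul_apply_eq_of_eq_zero_of_ne [Fintype κ'] {U : Matrix ι κ R} {T : Matrix κ κ' R}
    {σ : κ' → κ} (hT : ∀ j k, j ≠ σ k → T j k = 0) (i : ι) (k : κ') :
    (U * T) i k = U i (σ k) * T (σ k) k := by
  rw [mul_apply, Finset.sum_eq_single (σ k)]
  · intro j _ hj; rw [hT j k hj, mul_zero]
  · simp

theorem mul_apply_perm_eq_of_eq_zero_of_ne {T : Matrix κ κ R} {Y : Matrix κ ν R}
    (π : Equiv.Perm κ) (hT : ∀ j k, j ≠ π k → T j k = 0) (k : κ) (p : ν) :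
    (T * Y) (π k) p = T (π k) k * Y k p := by
  rw [mul_apply, Finset.sum_eq_single k]
  · intro j _ hj; rw [hT (π k) j (π.injective.ne hj.symm), zero_mul]
  · simp

end Semiring

theorem exists_perm_of_diagonal_mul_eq_mul_diagonal {R : Type*} [CommRing R] [IsDomain R]
    [Fintype κ] [DecidableEq κ] {T : Matrix κ κ R} {t t' : κ → R} (ht : Injective t)
    (ht' : Injective t') (hT : Injective T.mulVec) (h : diagonal t * T = T * diagonal t') :
    ∃ π : Equiv.Perm κ, t ∘ π = t' ∧ ∀ j k, j ≠ π k → T j k = 0 := by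
  have heq {j k} (hjk : T j k ≠ 0) : t j = t' k := by
    have := congrFun₂ h j k
    rw [diagonal_mul, mul_diagonal, mul_comm] at this
    exact mul_left_cancel₀ hjk this
  have hcol (k) : ∃ j, T j k ≠ 0 := by
    by_contra! hzero
    have : T *ᵥ Pi.single k 1 = T *ᵥ 0 := by
      rw [mulVec_single_one, mulVec_zero]; exact funext hzero
    simpa using congrFun (hT this) k
  choose σ hσ using hcol
  have hσinj : Injective σ := fun k₁ k₂ h₁₂ =>
    ht' <| by rw [← heq (hσ k₁), ← heq (hσ k₂), h₁₂]
  refine ⟨Equiv.ofBijective σ hσinj.bijective_of_finite, funext fun k => heq (hσ k), ?_⟩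
  intro j k hj
  by_contra hjk
  exact hj (ht ((heq hjk).trans (heq (hσ k)).symm))

end Matrix

section VandermondeKhatriRao

variable {R : Type*} [CommSemiring R] {μ κ κ' : Type*} [Fintype κ]

/-- `C ⊙ B` for the Vandermonde matrix `C l k = t k ^ (l + 1)`; the paper's `C̲ ⊙ B` is
`vandermondeKhatriRao (L - 1) t B`. -/
def vandermondeKhatriRao (n : ℕ) (t : κ → R) (B : Matrix μ κ R) : Matrix (Fin n × μ) κ R :=
  of fun p k => t k ^ ((p.1 : ℕ) + 1) * B p.2 k

theorem vandermondeKhatriRao_mulVec_injective {L : ℕ} {t : κ → R} {B : Matrix μ κ R}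
    (h : Injective (vandermondeKhatriRao (L - 1) t B).mulVec) :
    Injective (vandermondeKhatriRao L t B).mulVec :=
  mulVec_injective_of_submatrix (Prod.map (Fin.castLE (Nat.sub_le L 1)) id) h

theorem vandermondeKhatriRao_diagonal_mul_eq [Fintype κ'] [DecidableEq κ] [DecidableEq κ']
    {L : ℕ} {t : κ → R} {t' : κ' → R} {B : Matrix μ κ R} {B' : Matrix μ κ' R}
    {T : Matrix κ κ' R} (hinj : Injective (vandermondeKhatriRao (L - 1) t B).mulVec)
    (hT : vandermondeKhatriRao L t' B' = vandermondeKhatriRao L t B * T) :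
    diagonal t * T = T * diagonal t' :=
  diagonal_mul_eq_mul_diagonal_of_shift (U := vandermondeKhatriRao L t B)
    (Prod.map (Fin.castLE (Nat.sub_le L 1)) id)
    (fun p => (⟨p.1 + 1, Nat.add_lt_of_lt_sub p.1.isLt⟩, p.2))
    (fun _ _ => by simp only [vandermondeKhatriRao, of_apply, Prod.map, Fin.val_castLE, id]; ring)
    (fun _ _ => by simp only [vandermondeKhatriRao, of_apply, Prod.map, Fin.val_castLE, id]; ring)
    hinj hT

end VandermondeKhatriRao

theorem vandermonde_CP_uniqueness_general {P M L K : ℕ}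
    (A : Matrix (Fin P) (Fin K) ℂ) (B : Matrix (Fin M) (Fin K) ℂ)
    (t : Fin K → ℂ)
    (htdist : ∀ k₁ k₂ : Fin K, k₁ ≠ k₂ → t k₁ ≠ t k₂)
    (C : Matrix (Fin L) (Fin K) ℂ) (hC : ∀ l k, C l k = t k ^ ((l : ℕ) + 1))
    (hKR : Matrix.rank (Matrix.of fun (p : Fin (L - 1) × Fin M) (k : Fin K) =>
      t k ^ ((p.1 : ℕ) + 1) * B p.2 k) = K)
    (A' : Matrix (Fin P) (Fin K) ℂ) (B' : Matrix (Fin M) (Fin K) ℂ)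
    (t' : Fin K → ℂ)
    (htdist' : ∀ k₁ k₂ : Fin K, k₁ ≠ k₂ → t' k₁ ≠ t' k₂)
    (C' : Matrix (Fin L) (Fin K) ℂ) (hC' : ∀ l k, C' l k = t' k ^ ((l : ℕ) + 1))
    (hKR' : Matrix.rank (Matrix.of fun (p : Fin (L - 1) × Fin M) (k : Fin K) =>
      t' k ^ ((p.1 : ℕ) + 1) * B' p.2 k) = K)
    (hA' : A'.rank = K)
    (heq : ∀ (p : Fin P) (m : Fin M) (l : Fin L),
      ∑ k : Fin K, A p k * B m k * C l k = ∑ k : Fin K, A' p k * B' m k * C' l k) :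
    (∃ π : Equiv.Perm (Fin K), ∀ (k : Fin K) (p : Fin P) (m : Fin M) (l : Fin L),
      A' p k * B' m k * C' l k = A p (π k) * B m (π k) * C l (π k)) ∧
    Set.range t' = Set.range t := by
  classical
  set U := vandermondeKhatriRao L t B
  set U' := vandermondeKhatriRao L t' B'
  have hUd : Injective (vandermondeKhatriRao (L - 1) t B).mulVec :=
    mulVec_injective_of_rank_eq_card (by rw [Fintype.card_fin]; exact hKR)
  have hUd' : Injective (vandermondeKhatriRao (L - 1) t' B').mulVec :=
    mulVec_injective_of_rank_eq_card (by rw [Fintype.card_fin]; exact hKR')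
  have hY : U * Aᵀ = U' * A'ᵀ := by
    ext ⟨l, m⟩ p
    have := heq p m l
    simp only [hC, hC'] at this
    simp only [U, U', vandermondeKhatriRao, mul_apply, of_apply, transpose_apply]
    convert this using 2 <;> ring
  obtain ⟨X, hX⟩ := mulVec_surjective_iff_exists_right_inverse.mp <|
    mulVec_surjective_of_rank_eq_card (A := A'ᵀ) (by rw [rank_transpose, Fintype.card_fin, hA'])
  set T := Aᵀ * X
  have hT : U' = U * T := by rw [← Matrix.mul_assoc, hY, Matrix.mul_assoc, hX, Matrix.mul_one]
  have hTinj : Injective T.mulVec :=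
    mulVec_injective_of_mul (U := U) <| by
      rw [← hT]; exact vandermondeKhatriRao_mulVec_injective hUd'
  obtain ⟨π, hπt, hπT⟩ := exists_perm_of_diagonal_mul_eq_mul_diagonal
    (fun _ _ => not_imp_not.mp (htdist _ _)) (fun _ _ => not_imp_not.mp (htdist' _ _)) hTinj
    (vandermondeKhatriRao_diagonal_mul_eq hUd hT)
  have hAT : Aᵀ = T * A'ᵀ :=
    mul_right_injective_of_mulVec_injective (vandermondeKhatriRao_mulVec_injective hUd) <|
      show U * Aᵀ = U * (T * A'ᵀ) by rw [hY, hT, Matrix.mul_assoc]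
  refine ⟨⟨π, fun k p m l => ?_⟩, by rw [← hπt, Set.range_comp, π.range_eq_univ, Set.image_univ]⟩
  have hcol := congrFun₂ hT (l, m) k
  rw [mul_apply_eq_of_eq_zero_of_ne hπT] at hcol
  have hrow := congrFun₂ hAT (π k) p
  rw [mul_apply_perm_eq_of_eq_zero_of_ne π hπT] at hrow
  simp only [U, U', vandermondeKhatriRao, of_apply, transpose_apply] at hcol hrow
  rw [hC, hC', hrow]
  linear_combination A' p k * hcol

/-- Vandermonde-constrained CP uniqueness: if `𝒴 = Σ_k a_k ∘ b_k ∘ c_k` with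
`C` Vandermonde with pairwise distinct unit-modulus generators,
`rank(C̲ ⊙ B) = K` and `rank(A) = K`, then any alternative decomposition with
the same structure and constraints coincides with it up to a permutation of the
rank-one terms; in particular the generator sets coincide. -/
theorem vandermonde_CP_uniqueness {P M L K : ℕ}
    (A : Matrix (Fin P) (Fin K) ℂ) (B : Matrix (Fin M) (Fin K) ℂ)
    (t : Fin K → ℂ) (ht1 : ∀ k, ‖t k‖ = 1)
    (htdist : ∀ k₁ k₂ : Fin K, k₁ ≠ k₂ → t k₁ ≠ t k₂)
    (C : Matrix (Fin L) (Fin K) ℂ) (hC : ∀ l k, C l k = t k ^ ((l : ℕ) + 1))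
    (hKR : Matrix.rank (Matrix.of fun (p : Fin (L - 1) × Fin M) (k : Fin K) =>
      t k ^ ((p.1 : ℕ) + 1) * B p.2 k) = K)
    (hA : A.rank = K)
    (A' : Matrix (Fin P) (Fin K) ℂ) (B' : Matrix (Fin M) (Fin K) ℂ)
    (t' : Fin K → ℂ) (ht1' : ∀ k, ‖t' k‖ = 1)
    (htdist' : ∀ k₁ k₂ : Fin K, k₁ ≠ k₂ → t' k₁ ≠ t' k₂)
    (C' : Matrix (Fin L) (Fin K) ℂ) (hC' : ∀ l k, C' l k = t' k ^ ((l : ℕ) + 1))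
    (hKR' : Matrix.rank (Matrix.of fun (p : Fin (L - 1) × Fin M) (k : Fin K) =>
      t' k ^ ((p.1 : ℕ) + 1) * B' p.2 k) = K)
    (hA' : A'.rank = K)
    (heq : ∀ (p : Fin P) (m : Fin M) (l : Fin L),
      ∑ k : Fin K, A p k * B m k * C l k = ∑ k : Fin K, A' p k * B' m k * C' l k) :
    (∃ π : Equiv.Perm (Fin K), ∀ (k : Fin K) (p : Fin P) (m : Fin M) (l : Fin L),
      A' p k * B' m k * C' l k = A p (π k) * B m (π k) * C l (π k)) ∧
    Set.range t' = Set.range t :=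
  vandermonde_CP_uniqueness_general A B t htdist C hC hKR A' B' t' htdist' C' hC' hKR' hA' heq
end
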